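/- (Orthogonal Procrustes solution for the V-subproblem) Let M be a real B×R matrix admitting a factorization M = P D Qᵀ, where P ∈ ℝ^{B×R} has orthonormal columns (PᵀP = I_R), Q ∈ ℝ^{R×R} is orthogonal (QᵀQ = I_R), and D ∈ ℝ^{R×R} is a diagonal matrix with nonnegative diagonal entries. Then for every real B×R matrix V with orthonormal columns (VᵀV = I_R), one has ⟨M, V⟩ ≤ ⟨M, P Qᵀ⟩; moreover ⟨M, P Qᵀ⟩ = trace(D). In other words, V* = P Qᵀ maximizes ⟨M, V⟩ over all V with VᵀV = I_R. -/

import Mathlib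

/-! Since `⟨M, V⟩ = trace (Mᵀ * V) = ∑ₖ d k * (Pᵀ * V * Q) k k`, and `P` and `V * Q` both have
orthonormal columns, each diagonal entry of `Pᵀ * (V * Q)` is an inner product of unit vectors,
hence at most `1`, with equality for `V = P * Qᵀ`. As `d ≥ 0`, `⟨M, V⟩ ≤ ∑ₖ d k = ⟨M, P * Qᵀ⟩`. -/

open Matrix

namespace Matrix

variable {m n p R : Type*} [Fintype m]

theorem sum_sum_mul_eq_trace_transpose_mul [Fintype n] [CommSemiring R] (A B : Matrix m n R) :
    ∑ i, ∑ j, A i j * B i j = trace (Aᵀ * B) := by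
  simp only [trace, diag_apply, mul_apply, transpose_apply]
  exact Finset.sum_comm

theorem trace_transpose_mul_diagonal_mul_transpose [Fintype n] [Fintype p] [DecidableEq n]
    [CommRing R] (P : Matrix m n R) (d : n → R) (Q : Matrix p n R) (V : Matrix m p R) :
    trace ((P * diagonal d * Qᵀ)ᵀ * V) = ∑ k, d k * (Pᵀ * V * Q) k k := by
  rw [transpose_mul, transpose_mul, diagonal_transpose, transpose_transpose, Matrix.mul_assoc,
    Matrix.mul_assoc, trace_mul_comm, Matrix.mul_assoc, Matrix.mul_assoc]
  simp only [trace, diag_apply, diagonal_mul]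

theorem transpose_mul_self_mul_eq_one [Fintype n] [Fintype p] [CommSemiring R] [DecidableEq n]
    [DecidableEq p] {V : Matrix m n R} {Q : Matrix n p R} (hV : Vᵀ * V = 1) (hQ : Qᵀ * Q = 1) :
    (V * Q)ᵀ * (V * Q) = 1 := by
  rw [transpose_mul, Matrix.mul_assoc, ← Matrix.mul_assoc Vᵀ, hV, Matrix.one_mul, hQ]

theorem transpose_mul_apply_diag_le_one [DecidableEq n] [Field R] [LinearOrder R]
    [IsStrictOrderedRing R] {U W : Matrix m n R} (hU : Uᵀ * U = 1) (hW : Wᵀ * W = 1) (k : n) :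
    (Uᵀ * W) k k ≤ 1 := by
  have hU_col : ∑ i, U i k ^ 2 = 1 := by
    simpa [mul_apply, sq] using congrFun (congrFun hU k) k
  have hW_col : ∑ i, W i k ^ 2 = 1 := by
    simpa [mul_apply, sq] using congrFun (congrFun hW k) k
  have amgm : 2 * ∑ i, U i k * W i k ≤ ∑ i, U i k ^ 2 + ∑ i, W i k ^ 2 := by
    rw [Finset.mul_sum, ← Finset.sum_add_distrib]
    exact Finset.sum_le_sum fun i _ => by linarith [two_mul_le_add_sq (U i k) (W i k)]
  simp only [mul_apply, transpose_apply]
  linarith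

end Matrix

/-- Orthogonal Procrustes: if `M = P * D * Qᵀ` with `P` having orthonormal columns,
`Q` orthogonal, and `D = diagonal d` with `d ≥ 0`, then `V* = P * Qᵀ` maximizes
the Frobenius inner product `⟨M, V⟩` over all `V` with orthonormal columns, and
the maximal value is `trace D`. -/
theorem orthogonal_procrustes
    (B R : ℕ)
    (M P : Matrix (Fin B) (Fin R) ℝ)
    (Q : Matrix (Fin R) (Fin R) ℝ)
    (d : Fin R → ℝ)
    (hP : Pᵀ * P = 1)
    (hQ : Qᵀ * Q = 1)
    (hd : ∀ i, 0 ≤ d i)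
    (hM : M = P * Matrix.diagonal d * Qᵀ) :
    (∀ V : Matrix (Fin B) (Fin R) ℝ, Vᵀ * V = 1 →
        (∑ i, ∑ j, M i j * V i j) ≤ ∑ i, ∑ j, M i j * (P * Qᵀ) i j) ∧
      (∑ i, ∑ j, M i j * (P * Qᵀ) i j) = Matrix.trace (Matrix.diagonal d) := by
  have hPQ : Pᵀ * (P * Qᵀ) * Q = 1 := by
    rw [← Matrix.mul_assoc, hP, Matrix.one_mul, hQ]
  have hmax : ∑ i, ∑ j, M i j * (P * Qᵀ) i j = ∑ k, d k := by
    rw [sum_sum_mul_eq_trace_transpose_mul, hM, trace_transpose_mul_diagonal_mul_transpose, hPQ]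
    simp
  refine ⟨fun V hV => ?_, by rw [hmax, trace_diagonal]⟩
  rw [hmax, sum_sum_mul_eq_trace_transpose_mul, hM, trace_transpose_mul_diagonal_mul_transpose]
  refine Finset.sum_le_sum fun k _ => mul_le_of_le_one_right (hd k) ?_
  rw [Matrix.mul_assoc]
  exact transpose_mul_apply_diag_le_one hP (transpose_mul_self_mul_eq_one hV hQ) k
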